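/- Let X ~ Bern(p) be independent of (S₁,S₂) where P(S₁=0,S₂=0)=1−q, P(S₁=1,S₂=1)=qα, P(S₁=1,S₂=0)=q(1−α), P(S₁=0,S₂=1)=0, and let Y₁ = S₁·X, Y₂ = S₂·X. Then H(Y₁,S₁|Y₂,S₂) − H(S₁|Y₁,Y₂,S₂,X) = q(1−α)·H_b(p) + p(1−qα)·H_b( q(1−α)/(1−qα) ). -/

import Mathlib

open Finset

/-- Probability that a discrete random variable `X` takes value `x`,
under the probability mass function `μ` on a finite sample space. -/
noncomputable def prob {Ω α : Type*} [Fintype Ω] [DecidableEq α]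
    (μ : Ω → ℝ) (X : Ω → α) (x : α) : ℝ :=
  ∑ ω ∈ Finset.univ.filter (fun ω => X ω = x), μ ω

/-- `μ` is a probability mass function on the finite sample space `Ω`. -/
def IsPMF {Ω : Type*} [Fintype Ω] (μ : Ω → ℝ) : Prop :=
  (∀ ω, 0 ≤ μ ω) ∧ ∑ ω, μ ω = 1

/-- Shannon entropy (natural log) of a discrete random variable. -/
noncomputable def entH {Ω α : Type*} [Fintype Ω] [Fintype α] [DecidableEq α]
    (μ : Ω → ℝ) (X : Ω → α) : ℝ :=
  ∑ x, -(prob μ X x * Real.log (prob μ X x))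

/-- Conditional Shannon entropy `H(X | Y)`. -/
noncomputable def condH {Ω α β : Type*} [Fintype Ω] [Fintype α] [DecidableEq α]
    [Fintype β] [DecidableEq β] (μ : Ω → ℝ) (X : Ω → α) (Y : Ω → β) : ℝ :=
  entH μ (fun ω => (X ω, Y ω)) - entH μ Y

/-- Mutual information `I(X; Y)`. -/
noncomputable def mutInfo {Ω α β : Type*} [Fintype Ω] [Fintype α] [DecidableEq α]
    [Fintype β] [DecidableEq β] (μ : Ω → ℝ) (X : Ω → α) (Y : Ω → β) : ℝ :=
  entH μ X + entH μ Y - entH μ (fun ω => (X ω, Y ω))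

/-- Conditional mutual information `I(X; Y | Z)`. -/
noncomputable def condMutInfo {Ω α β γ : Type*} [Fintype Ω] [Fintype α] [DecidableEq α]
    [Fintype β] [DecidableEq β] [Fintype γ] [DecidableEq γ]
    (μ : Ω → ℝ) (X : Ω → α) (Y : Ω → β) (Z : Ω → γ) : ℝ :=
  condH μ X Z + condH μ Y Z - condH μ (fun ω => (X ω, Y ω)) Z

/-- `X` and `Y` are independent random variables under `μ`. -/
def IndepRV {Ω α β : Type*} [Fintype Ω] [DecidableEq α] [DecidableEq β]
    (μ : Ω → ℝ) (X : Ω → α) (Y : Ω → β) : Prop :=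
  ∀ x y, prob μ (fun ω => (X ω, Y ω)) (x, y) = prob μ X x * prob μ Y y

/-- `A → B → C` forms a Markov chain under `μ`:
`P(A,B,C) P(B) = P(A,B) P(B,C)` pointwise. -/
def MarkovChain {Ω α β γ : Type*} [Fintype Ω] [DecidableEq α] [DecidableEq β] [DecidableEq γ]
    (μ : Ω → ℝ) (A : Ω → α) (B : Ω → β) (C : Ω → γ) : Prop :=
  ∀ a b c, prob μ (fun ω => (A ω, B ω, C ω)) (a, b, c) * prob μ B b
    = prob μ (fun ω => (A ω, B ω)) (a, b) * prob μ (fun ω => (B ω, C ω)) (b, c)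

/-- Binary entropy function (natural log). -/
noncomputable def binEnt (x : ℝ) : ℝ :=
  -(x * Real.log x) - ((1 - x) * Real.log (1 - x))

/-!
Every random variable involved is a function of `(X, S₁, S₂)`, whose law is the product of
`Bern(p)` with the state law, so each entropy is a finite sum of `-x log x` over the cells of a
partition of the eight outcomes. Given `S₂ = 0` (probability `1 - qα`) we have
`S₁ ~ Bern(r)`, `r = q(1-α)/(1-qα)`, and `Y₁ = X` when `S₁ = 1`, while given `S₂ = 1` everything
is determined; hence `H(Y₁,S₁|Y₂,S₂) = q(1-α) H_b(p) + (1-qα) H_b(r)`. The state `S₁` is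
determined by `(Y₁, S₂, X)` unless `X = 0` and `S₂ = 0`, so `H(S₁|Y₁,Y₂,S₂,X) = (1-p)(1-qα) H_b(r)`.
Both follow from the grouping rule `η a + η (s - a) = η s + s H_b(a/s)` for `η = negMulLog`.
-/

open Real

section Entropy

variable {Ω A B : Type*} [Fintype Ω]

lemma prob_comp [Fintype A] [DecidableEq A] [DecidableEq B]
    (μ : Ω → ℝ) (T : Ω → A) (f : A → B) (b : B) :
    prob μ (fun ω => f (T ω)) b = ∑ t ∈ univ.filter (fun t => f t = b), prob μ T t := by
  simp [prob, sum_fiberwise_eq_sum_filter]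

lemma sum_prob [Fintype A] [DecidableEq A] (μ : Ω → ℝ) (T : Ω → A) :
    ∑ a, prob μ T a = ∑ ω, μ ω :=
  sum_fiberwise univ T μ

lemma entH_eq_of_comp [Fintype A] [DecidableEq A] [Fintype B] [DecidableEq B]
    {μ : Ω → ℝ} {T : Ω → A} {P : A → ℝ} (hT : ∀ a, prob μ T a = P a)
    {Z : Ω → B} (f : A → B) (hZ : ∀ ω, Z ω = f (T ω)) :
    entH μ Z = ∑ b, negMulLog (∑ t ∈ univ.filter (fun t => f t = b), P t) := by
  obtain rfl : Z = fun ω => f (T ω) := funext hZ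
  simp only [entH, prob_comp, hT, negMulLog, neg_mul]

end Entropy

lemma binEnt_eq_negMulLog (x : ℝ) : binEnt x = negMulLog x + negMulLog (1 - x) := by
  simp only [binEnt, negMulLog]; ring

lemma negMulLog_mul_add_negMulLog_one_sub_mul (p c : ℝ) :
    negMulLog (p * c) + negMulLog ((1 - p) * c) = negMulLog c + c * binEnt p := by
  rw [negMulLog_mul, negMulLog_mul, binEnt_eq_negMulLog]; ring

lemma negMulLog_add_negMulLog_sub {s : ℝ} (hs : s ≠ 0) (a : ℝ) :
    negMulLog a + negMulLog (s - a) = negMulLog s + s * binEnt (a / s) := by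
  have h := negMulLog_mul_add_negMulLog_one_sub_mul (a / s) s
  rwa [div_mul_cancel₀ a hs, sub_mul, one_mul, div_mul_cancel₀ a hs] at h

namespace JCAS

def law (p q α : ℝ) : Bool × Bool × Bool → ℝ
  | (x, s₁, s₂) => (if x then p else 1 - p) *
      (if s₁ then (if s₂ then q * α else q * (1 - α)) else (if s₂ then 0 else 1 - q))

lemma negMulLog_mul_one_sub_add_negMulLog_one_sub {q α : ℝ} (hqα : q * α < 1) :
    negMulLog (q * (1 - α)) + negMulLog (1 - q) =
      negMulLog (1 - q * α) + (1 - q * α) * binEnt (q * (1 - α) / (1 - q * α)) := by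
  rw [← negMulLog_add_negMulLog_sub (by linarith) (q * (1 - α)),
    show 1 - q * α - q * (1 - α) = 1 - q by ring]

variable {Ω : Type*} [Fintype Ω] {μ : Ω → ℝ} {p q α : ℝ} {X S₁ S₂ Y₁ Y₂ : Ω → Bool}

lemma prob_eq_law (hμ : ∑ ω, μ ω = 1) (hX : prob μ X true = p)
    (hS : prob μ (fun ω => (S₁ ω, S₂ ω)) (false, false) = 1 - q ∧
          prob μ (fun ω => (S₁ ω, S₂ ω)) (true, true) = q * α ∧
          prob μ (fun ω => (S₁ ω, S₂ ω)) (false, true) = 0 ∧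
          prob μ (fun ω => (S₁ ω, S₂ ω)) (true, false) = q * (1 - α))
    (hInd : IndepRV μ X (fun ω => (S₁ ω, S₂ ω))) (t : Bool × Bool × Bool) :
    prob μ (fun ω => (X ω, S₁ ω, S₂ ω)) t = law p q α t := by
  obtain ⟨hS₀₀, hS₁₁, hS₀₁, hS₁₀⟩ := hS
  have hXf : prob μ X false = 1 - p := by
    have h := sum_prob μ X
    rw [Fintype.sum_bool, hμ, hX] at h
    linarith
  obtain ⟨x, s₁, s₂⟩ := t
  rw [hInd x (s₁, s₂)]
  cases x <;> cases s₁ <;> cases s₂ <;> simp [law, *]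

lemma entH_Y₁S₁_Y₂S₂ (hT : ∀ t, prob μ (fun ω => (X ω, S₁ ω, S₂ ω)) t = law p q α t)
    (hY₁ : ∀ ω, Y₁ ω = (S₁ ω && X ω)) (hY₂ : ∀ ω, Y₂ ω = (S₂ ω && X ω)) :
    entH μ (fun ω => ((Y₁ ω, S₁ ω), (Y₂ ω, S₂ ω))) =
      negMulLog (p * (q * α)) + negMulLog (p * (q * (1 - α))) + negMulLog ((1 - p) * (q * α))
        + negMulLog ((1 - p) * (q * (1 - α))) + negMulLog (1 - q) := by
  rw [entH_eq_of_comp hT (fun t => ((t.2.1 && t.1, t.2.1), (t.2.2 && t.1, t.2.2)))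
    (fun ω => by simp [hY₁, hY₂])]
  simp only [sum_filter, Fintype.sum_prod_type, Fintype.sum_bool, law, Prod.mk.injEq, Bool.true_and,
    Bool.false_and, reduceCtorEq, and_true, and_false, ↓reduceIte, mul_zero, add_zero, zero_add,
    negMulLog_zero]
  ring_nf

lemma entH_Y₂S₂ (hT : ∀ t, prob μ (fun ω => (X ω, S₁ ω, S₂ ω)) t = law p q α t)
    (hY₂ : ∀ ω, Y₂ ω = (S₂ ω && X ω)) :
    entH μ (fun ω => (Y₂ ω, S₂ ω)) =
      negMulLog (p * (q * α)) + negMulLog ((1 - p) * (q * α)) + negMulLog (1 - q * α) := by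
  rw [entH_eq_of_comp hT (fun t => (t.2.2 && t.1, t.2.2)) (fun ω => by simp [hY₂])]
  simp only [sum_filter, Fintype.sum_prod_type, Fintype.sum_bool, law, Prod.mk.injEq, Bool.true_and,
    Bool.false_and, reduceCtorEq, and_true, and_false, ↓reduceIte, mul_zero, add_zero, zero_add,
    negMulLog_zero]
  ring_nf

lemma entH_S₁_Y₁Y₂S₂X (hT : ∀ t, prob μ (fun ω => (X ω, S₁ ω, S₂ ω)) t = law p q α t)
    (hY₁ : ∀ ω, Y₁ ω = (S₁ ω && X ω)) (hY₂ : ∀ ω, Y₂ ω = (S₂ ω && X ω)) :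
    entH μ (fun ω => (S₁ ω, (Y₁ ω, Y₂ ω, S₂ ω, X ω))) =
      negMulLog (p * (q * α)) + negMulLog (p * (q * (1 - α))) + negMulLog ((1 - p) * (q * α))
        + negMulLog ((1 - p) * (q * (1 - α))) + negMulLog (p * (1 - q))
        + negMulLog ((1 - p) * (1 - q)) := by
  rw [entH_eq_of_comp hT (fun t => (t.2.1, (t.2.1 && t.1, t.2.2 && t.1, t.2.2, t.1)))
    (fun ω => by simp [hY₁, hY₂])]
  simp only [sum_filter, Fintype.sum_prod_type, Fintype.sum_bool, law, Prod.mk.injEq, Bool.true_and,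
    Bool.false_and, reduceCtorEq, and_true, and_false, ↓reduceIte, mul_zero, add_zero, zero_add,
    negMulLog_zero]
  ring_nf

lemma entH_Y₁Y₂S₂X (hT : ∀ t, prob μ (fun ω => (X ω, S₁ ω, S₂ ω)) t = law p q α t)
    (hY₁ : ∀ ω, Y₁ ω = (S₁ ω && X ω)) (hY₂ : ∀ ω, Y₂ ω = (S₂ ω && X ω)) :
    entH μ (fun ω => (Y₁ ω, Y₂ ω, S₂ ω, X ω)) =
      negMulLog (p * (q * α)) + negMulLog (p * (q * (1 - α))) + negMulLog ((1 - p) * (q * α))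
        + negMulLog (p * (1 - q)) + negMulLog ((1 - p) * (1 - q * α)) := by
  rw [entH_eq_of_comp hT (fun t => (t.2.1 && t.1, t.2.2 && t.1, t.2.2, t.1))
    (fun ω => by simp [hY₁, hY₂])]
  simp only [sum_filter, Fintype.sum_prod_type, Fintype.sum_bool, law, Prod.mk.injEq, Bool.true_and,
    Bool.false_and, reduceCtorEq, and_true, and_false, ↓reduceIte, mul_zero, add_zero, zero_add,
    negMulLog_zero]
  ring_nf

lemma condH_Y₁S₁_Y₂S₂ (hqα : q * α < 1)
    (hT : ∀ t, prob μ (fun ω => (X ω, S₁ ω, S₂ ω)) t = law p q α t)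
    (hY₁ : ∀ ω, Y₁ ω = (S₁ ω && X ω)) (hY₂ : ∀ ω, Y₂ ω = (S₂ ω && X ω)) :
    condH μ (fun ω => (Y₁ ω, S₁ ω)) (fun ω => (Y₂ ω, S₂ ω)) =
      q * (1 - α) * binEnt p + (1 - q * α) * binEnt (q * (1 - α) / (1 - q * α)) := by
  rw [condH, entH_Y₁S₁_Y₂S₂ hT hY₁ hY₂, entH_Y₂S₂ hT hY₂]
  linear_combination negMulLog_mul_add_negMulLog_one_sub_mul p (q * (1 - α))
    + negMulLog_mul_one_sub_add_negMulLog_one_sub hqα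

lemma condH_S₁_Y₁Y₂S₂X (hqα : q * α < 1)
    (hT : ∀ t, prob μ (fun ω => (X ω, S₁ ω, S₂ ω)) t = law p q α t)
    (hY₁ : ∀ ω, Y₁ ω = (S₁ ω && X ω)) (hY₂ : ∀ ω, Y₂ ω = (S₂ ω && X ω)) :
    condH μ S₁ (fun ω => (Y₁ ω, Y₂ ω, S₂ ω, X ω)) =
      (1 - p) * (1 - q * α) * binEnt (q * (1 - α) / (1 - q * α)) := by
  rw [condH, entH_S₁_Y₁Y₂S₂X hT hY₁ hY₂, entH_Y₁Y₂S₂X hT hY₁ hY₂,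
    negMulLog_mul (1 - p) (q * (1 - α)), negMulLog_mul (1 - p) (1 - q),
    negMulLog_mul (1 - p) (1 - q * α)]
  linear_combination (1 - p) * negMulLog_mul_one_sub_add_negMulLog_one_sub hqα

end JCAS

theorem binary_JCAS_secrecy_rate_general
    {Ω : Type*} [Fintype Ω]
    (p q α : ℝ) (hqα : q * α < 1)
    (μ : Ω → ℝ) (hμ : IsPMF μ)
    (X S₁ S₂ : Ω → Bool)
    (hX : prob μ X true = p)
    (hS : prob μ (fun ω => (S₁ ω, S₂ ω)) (false, false) = 1 - q ∧
          prob μ (fun ω => (S₁ ω, S₂ ω)) (true, true) = q * α ∧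
          prob μ (fun ω => (S₁ ω, S₂ ω)) (false, true) = 0 ∧
          prob μ (fun ω => (S₁ ω, S₂ ω)) (true, false) = q * (1 - α))
    (hInd : IndepRV μ X (fun ω => (S₁ ω, S₂ ω)))
    (Y₁ Y₂ : Ω → Bool) (hY₁ : ∀ ω, Y₁ ω = (S₁ ω && X ω))
    (hY₂ : ∀ ω, Y₂ ω = (S₂ ω && X ω)) :
    condH μ (fun ω => (Y₁ ω, S₁ ω)) (fun ω => (Y₂ ω, S₂ ω))
      - condH μ S₁ (fun ω => (Y₁ ω, Y₂ ω, S₂ ω, X ω))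
    = q * (1 - α) * binEnt p
      + p * (1 - q * α) * binEnt (q * (1 - α) / (1 - q * α)) := by
  have hT := JCAS.prob_eq_law hμ.2 hX hS hInd
  rw [JCAS.condH_Y₁S₁_Y₂S₂ hqα hT hY₁ hY₂, JCAS.condH_S₁_Y₁Y₂S₂X hqα hT hY₁ hY₂]
  ring

/-- For the binary JCAS channel with multiplicative Bernoulli
states, `H(Y₁,S₁|Y₂,S₂) − H(S₁|Y₁,Y₂,S₂,X)
  = q(1−α)·H_b(p) + p(1−qα)·H_b(q(1−α)/(1−qα))`. -/
theorem binary_JCAS_secrecy_rate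
    {Ω : Type*} [Fintype Ω]
    (p q α : ℝ) (hp : p ∈ Set.Icc (0:ℝ) 1) (hq : q ∈ Set.Icc (0:ℝ) 1)
    (hα : α ∈ Set.Icc (0:ℝ) 1) (hqα : q * α < 1)
    (μ : Ω → ℝ) (hμ : IsPMF μ)
    (X S₁ S₂ : Ω → Bool)
    (hX : prob μ X true = p)
    (hS : prob μ (fun ω => (S₁ ω, S₂ ω)) (false, false) = 1 - q ∧
          prob μ (fun ω => (S₁ ω, S₂ ω)) (true, true) = q * α ∧
          prob μ (fun ω => (S₁ ω, S₂ ω)) (false, true) = 0 ∧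
          prob μ (fun ω => (S₁ ω, S₂ ω)) (true, false) = q * (1 - α))
    (hInd : IndepRV μ X (fun ω => (S₁ ω, S₂ ω)))
    (Y₁ Y₂ : Ω → Bool) (hY₁ : ∀ ω, Y₁ ω = (S₁ ω && X ω))
    (hY₂ : ∀ ω, Y₂ ω = (S₂ ω && X ω)) :
    condH μ (fun ω => (Y₁ ω, S₁ ω)) (fun ω => (Y₂ ω, S₂ ω))
      - condH μ S₁ (fun ω => (Y₁ ω, Y₂ ω, S₂ ω, X ω))
    = q * (1 - α) * binEnt p
      + p * (1 - q * α) * binEnt (q * (1 - α) / (1 - q * α)) :=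
  binary_JCAS_secrecy_rate_general p q α hqα μ hμ X S₁ S₂ hX hS hInd Y₁ Y₂ hY₁ hY₂
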